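/- arXiv:1905.05480 — 2 statements merged into one kernel-verified Lean document; each statement's English description precedes it below -/
import Mathlib

section
/- Let X be a proper metric space, U an open subset of X, and f : U → ℝ^k a continuous map. Suppose there is ε ∈ (0,1) such that for every p ∈ U and every unit vector ξ ∈ ℝ^k, there exist points q ∈ U arbitrarily close to p with q ≠ p and |(f(q) - f(p))/dist(p,q) - ξ| < ε. Then f is (1-ε)-open on U: for any x ∈ U and v ∈ ℝ^k such that the closed ball of radius (1-ε)⁻¹·|f(x) - v| around x is contained in U, there exists y ∈ U with f(y) = v and (1-ε)·dist(x,y) ≤ |f(x) - v|. -/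
/-!
Minimize `g y = (1 - ε) * dist x y + ‖f y - v‖` over the compact ball `closedBall x r`,
`r = (1 - ε)⁻¹ * ‖f x - v‖`. If a minimizer `y` had `f y ≠ v`, the hypothesis applied to the
direction of `v - f y` would give a nearby point `q` with `g q < g y ≤ g x`; the bound
`g q ≤ ‖f x - v‖` keeps `q` inside the ball, contradicting minimality. Hence `f y = v`, and
`g y ≤ g x` is the distance estimate.
-/

open Metric Set NormedSpace

section Normed

variable {V : Type*} [NormedAddCommGroup V] [NormedSpace ℝ V]

lemma norm_sub_smul_normalize {u : V} {d : ℝ} (hd0 : 0 ≤ d) (hd : d ≤ ‖u‖) :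
    ‖u - d • normalize u‖ = ‖u‖ - d := by
  rcases eq_or_ne u 0 with rfl | hu
  · simp [le_antisymm (by simpa using hd) hd0]
  · rw [show u - d • normalize u = (‖u‖ - d) • normalize u by rw [sub_smul, norm_smul_normalize],
      norm_smul, norm_normalize hu, mul_one, Real.norm_of_nonneg (sub_nonneg.2 hd)]

lemma norm_sub_lt_of_secant_near_normalize {a b v : V} {d ε : ℝ} (hd0 : 0 < d)
    (hd : d ≤ ‖a - v‖) (h : ‖d⁻¹ • (b - a) - normalize (v - a)‖ < ε) :
    ‖b - v‖ < ‖a - v‖ - (1 - ε) * d := by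
  have hsecant : ‖b - a - d • normalize (v - a)‖ < ε * d := by
    rw [← smul_inv_smul₀ hd0.ne' (b - a), ← smul_sub, norm_smul, Real.norm_of_nonneg hd0.le,
      mul_comm ε]
    exact mul_lt_mul_of_pos_left h hd0
  have hsplit : b - v = (b - a - d • normalize (v - a)) + (a - v - d • normalize (a - v)) := by
    rw [← neg_sub a v, normalize_neg, smul_neg]
    abel
  calc ‖b - v‖ ≤ ‖b - a - d • normalize (v - a)‖ + ‖a - v - d • normalize (a - v)‖ :=
        hsplit ▸ norm_add_le _ _
    _ < ε * d + (‖a - v‖ - d) := by rw [norm_sub_smul_normalize hd0.le hd]; linarith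
    _ = ‖a - v‖ - (1 - ε) * d := by ring

lemma exists_mul_dist_add_norm_sub_lt {X : Type*} [MetricSpace X] {U : Set X} {f : X → V}
    {ε : ℝ}
    (hdir : ∀ p ∈ U, ∀ ξ : V, ‖ξ‖ = 1 → ∀ η > (0:ℝ), ∃ q ∈ U, q ≠ p ∧ dist q p < η ∧
      ‖(dist p q)⁻¹ • (f q - f p) - ξ‖ < ε)
    {y : X} (hy : y ∈ U) {v : V} (hv : f y ≠ v) :
    ∃ q ∈ U, (1 - ε) * dist y q + ‖f q - v‖ < ‖f y - v‖ := by
  obtain ⟨q, hqU, hqy, hdist, hnear⟩ := hdir y hy (normalize (v - f y))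
    (norm_normalize (sub_ne_zero.2 hv.symm)) ‖f y - v‖ (norm_pos_iff.2 (sub_ne_zero.2 hv))
  rw [dist_comm] at hdist
  have := norm_sub_lt_of_secant_near_normalize (dist_pos.2 hqy.symm) hdist.le hnear
  exact ⟨q, hqU, by linarith⟩

end Normed

theorem exists_eq_zero_of_forall_exists_mul_dist_add_lt {X : Type*} [MetricSpace X]
    [ProperSpace X] {U : Set X} {φ : X → ℝ} {c : ℝ} (hc : 0 < c) (hφ : ContinuousOn φ U)
    (hφ0 : ∀ y, 0 ≤ φ y) (hdesc : ∀ y ∈ U, φ y ≠ 0 → ∃ q ∈ U, c * dist y q + φ q < φ y)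
    {x : X} (hball : closedBall x (c⁻¹ * φ x) ⊆ U) :
    ∃ y ∈ U, φ y = 0 ∧ c * dist x y ≤ φ x := by
  set g : X → ℝ := fun y ↦ c * dist x y + φ y
  have hxK : x ∈ closedBall x (c⁻¹ * φ x) :=
    mem_closedBall_self (mul_nonneg (inv_nonneg.2 hc.le) (hφ0 x))
  have hg : ContinuousOn g (closedBall x (c⁻¹ * φ x)) :=
    (continuous_const.mul (continuous_const.dist continuous_id)).continuousOn.add (hφ.mono hball)
  obtain ⟨y, hyK, hmin⟩ := (isCompact_closedBall x _).exists_isMinOn ⟨x, hxK⟩ hg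
  have hgy : g y ≤ φ x := by simpa [g] using hmin hxK
  have hφy : φ y = 0 := by
    by_contra hne
    obtain ⟨q, -, hq⟩ := hdesc y (hball hyK) hne
    have hgq : g q < g y := by
      have := mul_le_mul_of_nonneg_left (dist_triangle x y q) hc.le
      simp only [g]
      linarith
    have hqK : q ∈ closedBall x (c⁻¹ * φ x) := by
      rw [mem_closedBall', le_inv_mul_iff₀ hc]
      linarith [hφ0 q, show g q = c * dist x q + φ q from rfl]
    exact (hmin hqK).not_gt hgq
  exact ⟨y, hball hyK, hφy, by simpa [g, hφy] using hgy⟩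

theorem stmt0_general {X : Type*} [MetricSpace X] [ProperSpace X] {k : ℕ}
    (U : Set X) (f : X → EuclideanSpace ℝ (Fin k))
    (hf : ContinuousOn f U) (ε : ℝ) (hε1 : ε < 1)
    (hdir : ∀ p ∈ U, ∀ ξ : EuclideanSpace ℝ (Fin k), ‖ξ‖ = 1 →
      ∀ η > (0:ℝ), ∃ q ∈ U, q ≠ p ∧ dist q p < η ∧
        ‖(dist p q)⁻¹ • (f q - f p) - ξ‖ < ε) :
    ∀ x ∈ U, ∀ v : EuclideanSpace ℝ (Fin k),
      Metric.closedBall x ((1 - ε)⁻¹ * ‖f x - v‖) ⊆ U →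
      ∃ y ∈ U, f y = v ∧ (1 - ε) * dist x y ≤ ‖f x - v‖ := by
  intro x _ v hball
  obtain ⟨y, hyU, hy0, hy⟩ := exists_eq_zero_of_forall_exists_mul_dist_add_lt (sub_pos.2 hε1)
    ((hf.sub continuousOn_const).norm) (fun _ ↦ norm_nonneg _)
    (fun y hy hne ↦
      exists_mul_dist_add_norm_sub_lt hdir hy (sub_ne_zero.1 (norm_ne_zero_iff.1 hne)))
    hball
  exact ⟨y, hyU, sub_eq_zero.1 (norm_eq_zero.1 hy0), hy⟩

/-- the openness lemma for maps into ℝ^k on a proper metric space. -/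
theorem stmt0 {X : Type*} [MetricSpace X] [ProperSpace X] {k : ℕ}
    (U : Set X) (hU : IsOpen U) (f : X → EuclideanSpace ℝ (Fin k))
    (hf : ContinuousOn f U) (ε : ℝ) (hε0 : 0 < ε) (hε1 : ε < 1)
    (hdir : ∀ p ∈ U, ∀ ξ : EuclideanSpace ℝ (Fin k), ‖ξ‖ = 1 →
      ∀ η > (0:ℝ), ∃ q ∈ U, q ≠ p ∧ dist q p < η ∧
        ‖(dist p q)⁻¹ • (f q - f p) - ξ‖ < ε) :
    ∀ x ∈ U, ∀ v : EuclideanSpace ℝ (Fin k),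
      Metric.closedBall x ((1 - ε)⁻¹ * ‖f x - v‖) ⊆ U →
      ∃ y ∈ U, f y = v ∧ (1 - ε) * dist x y ≤ ‖f x - v‖ :=
  stmt0_general U f hf ε hε1 hdir
end

section
/- In the proof of the openness lemma, the key step: let X be a proper metric space, f : U → ℝ^k continuous on an open set U, v ∈ ℝ^k, and q ∈ U with f(q) ≠ v. Suppose q₁ ∈ U satisfies |(f(q₁) - f(q))/dist(q,q₁) - ξ| < ε where ξ = (v - f(q))/|v - f(q)|, and 0 < dist(q,q₁) ≤ |f(q) - v|. Then |f(q₁) - v| ≤ |f(q) - v| - (1-ε)·dist(q,q₁). -/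
/-- the key step of the openness lemma. -/
theorem stmt1 {X : Type*} [MetricSpace X] {k : ℕ}
    (f : X → EuclideanSpace ℝ (Fin k)) (v : EuclideanSpace ℝ (Fin k))
    (q q₁ : X) (ε : ℝ) (hε0 : 0 < ε) (hε1 : ε < 1)
    (hfq : f q ≠ v)
    (hdir : ‖(dist q q₁)⁻¹ • (f q₁ - f q) - ‖v - f q‖⁻¹ • (v - f q)‖ < ε)
    (hd0 : 0 < dist q q₁) (hd1 : dist q q₁ ≤ ‖f q - v‖) :
    ‖f q₁ - v‖ ≤ ‖f q - v‖ - (1 - ε) * dist q q₁ := by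
  obtain ⟨d, hd⟩ : ∃ d, d = dist q q₁ := ⟨_, rfl⟩
  obtain ⟨ξ, hξdef⟩ : ∃ ξ : EuclideanSpace ℝ (Fin k), ξ = ‖v - f q‖⁻¹ • (v - f q) := ⟨_, rfl⟩
  obtain ⟨w, hwdef⟩ : ∃ w : EuclideanSpace ℝ (Fin k), w = d⁻¹ • (f q₁ - f q) - ξ := ⟨_, rfl⟩
  rw [← hd] at hd0 hd1 ⊢
  rw [← hd, ← hξdef, ← hwdef] at hdir
  have hvq : v - f q ≠ 0 := sub_ne_zero.mpr (Ne.symm hfq)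
  have hr : (0:ℝ) < ‖v - f q‖ := norm_pos_iff.mpr hvq
  have hrr : ‖v - f q‖ = ‖f q - v‖ := norm_sub_rev _ _
  have hξ1 : ‖ξ‖ = 1 := by
    rw [hξdef, norm_smul, norm_inv, norm_norm, inv_mul_cancel₀ hr.ne']
  have hrξ : ‖v - f q‖ • ξ = v - f q := by
    rw [hξdef, smul_smul, mul_inv_cancel₀ hr.ne', one_smul]
  have key : f q₁ - v = (d - ‖v - f q‖) • ξ + d • w := by
    have h1 : d • w = (f q₁ - f q) - d • ξ := by
      rw [hwdef, smul_sub, smul_smul, mul_inv_cancel₀ hd0.ne', one_smul]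
    rw [h1, sub_smul, hrξ]; abel
  calc ‖f q₁ - v‖ = ‖(d - ‖v - f q‖) • ξ + d • w‖ := by rw [key]
    _ ≤ ‖(d - ‖v - f q‖) • ξ‖ + ‖d • w‖ := norm_add_le _ _
    _ = |d - ‖v - f q‖| + |d| * ‖w‖ := by
        rw [norm_smul, norm_smul, hξ1, mul_one, Real.norm_eq_abs, Real.norm_eq_abs]
    _ ≤ (‖f q - v‖ - d) + d * ε := by
        have h1 : |d - ‖v - f q‖| = ‖f q - v‖ - d := by
          rw [abs_of_nonpos (by rw [hrr] at *; linarith), hrr]; ring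
        have h2 : |d| * ‖w‖ ≤ d * ε := by
          rw [abs_of_pos hd0]
          exact mul_le_mul_of_nonneg_left hdir.le hd0.le
        linarith
    _ = ‖f q - v‖ - (1 - ε) * d := by ring
end
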